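/- Let K ⊆ L be fields, let D be a subring of K, and set T = K+XL[X] and R = D+XL[X]. Then R is a bounded factorization domain (BFD) if and only if T is a BFD and D is a field. -/

import Mathlib

open Polynomial

/-- The composite `A + X B[X]`: the subring of the polynomial ring `B[X]` consisting of
polynomials whose constant coefficient lies in the subring `A`. -/
def composite {B : Type*} [CommRing B] (A : Subring B) : Subring (Polynomial B) where
  carrier := {f | f.coeff 0 ∈ A}
  mul_mem' := fun hf hg => by simpa [Polynomial.mul_coeff_zero] using A.mul_mem hf hg
  one_mem' := by simpa using A.one_mem
  add_mem' := fun hf hg => by simpa using A.add_mem hf hg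
  zero_mem' := by simpa using A.zero_mem
  neg_mem' := fun hf => by simpa using A.neg_mem hf

/-- An integral domain is atomic if every nonzero nonunit is a finite product of
irreducible elements. -/
def IsAtomicDomain (R : Type*) [CommRing R] : Prop :=
  ∀ a : R, a ≠ 0 → ¬IsUnit a →
    ∃ s : Multiset R, (∀ x ∈ s, Irreducible x) ∧ s.prod = a

/-- A bounded factorization domain (BFD): atomic, and for each nonzero nonunit there is a
bound on the number of factors in any factorization into irreducibles. -/
def IsBFD (R : Type*) [CommRing R] : Prop :=
  IsAtomicDomain R ∧
    ∀ a : R, a ≠ 0 → ¬IsUnit a → ∃ N : ℕ, ∀ s : Multiset R,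
      (∀ x ∈ s, Irreducible x) → s.prod = a → Multiset.card s ≤ N

section Aux

variable {L : Type*} [Field L]

lemma mem_composite {A : Subring L} {f : Polynomial L} : f ∈ composite A ↔ f.coeff 0 ∈ A :=
  Iff.rfl

lemma val_ne_zero {A : Subring L} {f : composite A} (h : f ≠ 0) : (f : Polynomial L) ≠ 0 :=
  fun hz => h (Subtype.ext hz)

lemma isUnit_val {A : Subring L} {f : composite A} (h : IsUnit f) :
    IsUnit (f : Polynomial L) :=
  h.map (composite A).subtype

/-- Nonzero nonunits of `composite A` have `natDegree ≥ 1`, given `A` closed under inverses. -/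
lemma one_le_natDegree {A : Subring L}
    (hA : ∀ a : L, a ∈ A → a ≠ 0 → ∃ b ∈ A, a * b = 1)
    {f : composite A} (h0 : f ≠ 0) (hu : ¬IsUnit f) :
    1 ≤ (f : Polynomial L).natDegree := by
  by_contra h
  push_neg at h
  interval_cases hd : (f : Polynomial L).natDegree
  have hC : (f : Polynomial L) = C ((f : Polynomial L).coeff 0) :=
    Polynomial.eq_C_of_natDegree_eq_zero hd
  have hc0 : (f : Polynomial L).coeff 0 ≠ 0 := by
    intro hz
    exact val_ne_zero h0 (by rw [hC, hz, map_zero])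
  obtain ⟨b, hbA, hb⟩ := hA _ f.2 hc0
  apply hu
  refine IsUnit.of_mul_eq_one (a := f) ⟨C b, by simpa [mem_composite] using hbA⟩ ?_
  apply Subtype.ext
  show (f : Polynomial L) * C b = 1
  rw [hC, ← map_mul, hb, map_one]

lemma prod_card {A : Subring L}
    (hA : ∀ a : L, a ∈ A → a ≠ 0 → ∃ b ∈ A, a * b = 1) :
    ∀ s : Multiset (composite A), (∀ x ∈ s, Irreducible x) →
      ((s.prod : Polynomial L) ≠ 0 ∧
        Multiset.card s ≤ (s.prod : Polynomial L).natDegree) := by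
  intro s
  induction s using Multiset.induction_on with
  | empty =>
      intro _
      constructor
      · show ((1 : composite A) : Polynomial L) ≠ 0
        simp
      · simp
  | cons a s ih =>
      intro hs
      obtain ⟨hp, hc⟩ := ih fun x hx => hs x (Multiset.mem_cons_of_mem hx)
      have ha := hs a (Multiset.mem_cons_self a s)
      have ha0 : (a : Polynomial L) ≠ 0 := val_ne_zero ha.ne_zero
      have hd : 1 ≤ (a : Polynomial L).natDegree :=
        one_le_natDegree hA ha.ne_zero ha.not_isUnit
      rw [Multiset.prod_cons]
      have hval : ((a * s.prod : composite A) : Polynomial L)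
          = (a : Polynomial L) * (s.prod : Polynomial L) := rfl
      rw [hval]
      constructor
      · exact mul_ne_zero ha0 hp
      · rw [Polynomial.natDegree_mul ha0 hp, Multiset.card_cons]
        omega

lemma atomic_of_field {A : Subring L}
    (hA : ∀ a : L, a ∈ A → a ≠ 0 → ∃ b ∈ A, a * b = 1) :
    IsAtomicDomain (composite A) := by
  have key : ∀ n (f : composite A), (f : Polynomial L).natDegree ≤ n → f ≠ 0 → ¬IsUnit f →
      ∃ s : Multiset (composite A), (∀ x ∈ s, Irreducible x) ∧ s.prod = f := by
    intro n
    induction n with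
    | zero =>
        intro f hdeg h0 hu
        have := one_le_natDegree hA h0 hu
        omega
    | succ n ih =>
        intro f hdeg h0 hu
        by_cases hirr : Irreducible f
        · exact ⟨{f}, by simpa using hirr, by simp⟩
        · have : ¬∀ a b : composite A, f = a * b → IsUnit a ∨ IsUnit b :=
            fun h => hirr ⟨hu, h⟩
          push_neg at this
          obtain ⟨a, b, hab, hua, hub⟩ := this
          have ha0 : a ≠ 0 := by rintro rfl; exact h0 (by simp [hab])
          have hb0 : b ≠ 0 := by rintro rfl; exact h0 (by simp [hab])
          have hda : 1 ≤ (a : Polynomial L).natDegree := one_le_natDegree hA ha0 hua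
          have hdb : 1 ≤ (b : Polynomial L).natDegree := one_le_natDegree hA hb0 hub
          have hsum : (f : Polynomial L).natDegree
              = (a : Polynomial L).natDegree + (b : Polynomial L).natDegree := by
            have hv : (f : Polynomial L) = (a : Polynomial L) * (b : Polynomial L) := by
              rw [hab]; rfl
            rw [hv, Polynomial.natDegree_mul (val_ne_zero ha0) (val_ne_zero hb0)]
          obtain ⟨sa, hsa, hpa⟩ := ih a (by omega) ha0 hua
          obtain ⟨sb, hsb, hpb⟩ := ih b (by omega) hb0 hub
          refine ⟨sa + sb, ?_, ?_⟩
          · intro x hx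
            rcases Multiset.mem_add.mp hx with h | h
            · exact hsa x h
            · exact hsb x h
          · rw [Multiset.prod_add, hpa, hpb, hab]
  exact fun f h0 hu => key _ f le_rfl h0 hu

lemma bfd_of_field {A : Subring L}
    (hA : ∀ a : L, a ∈ A → a ≠ 0 → ∃ b ∈ A, a * b = 1) :
    IsBFD (composite A) := by
  refine ⟨atomic_of_field hA, fun f h0 hu => ⟨(f : Polynomial L).natDegree, fun s hs hsf => ?_⟩⟩
  obtain ⟨-, hc⟩ := prod_card hA s hs
  rw [hsf] at hc
  exact hc

/-- If `composite D` is a BFD, then `D` is a field. -/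
lemma isField_of_bfd {D : Subring L} (hbfd : IsBFD (composite D)) : IsField D := by
  obtain ⟨hatomic, hbound⟩ := hbfd
  refine ⟨⟨0, 1, zero_ne_one⟩, mul_comm, ?_⟩
  intro d hd0
  by_contra hno
  push_neg at hno
  -- translate: d.val ∈ D nonzero with no inverse in D
  have hdval : (d : L) ≠ 0 := fun h => hd0 (Subtype.ext h)
  -- elements of composite D
  set R := composite D
  have hXmem : (X : Polynomial L) ∈ R := by
    show (X : Polynomial L).coeff 0 ∈ D
    simpa using D.zero_mem
  have hCdmem : (C (d : L) : Polynomial L) ∈ R := by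
    show (C (d : L) : Polynomial L).coeff 0 ∈ D
    simpa using d.2
  set xR : R := ⟨X, hXmem⟩ with hxR
  set cd : R := ⟨C (d : L), hCdmem⟩ with hcd
  -- xR is nonzero and not a unit
  have hx0 : xR ≠ 0 := fun h => Polynomial.X_ne_zero (congrArg Subtype.val h)
  have hxu : ¬IsUnit xR := fun h => Polynomial.not_isUnit_X (isUnit_val h)
  -- cd is nonzero and not a unit
  have hc0 : cd ≠ 0 := fun h => (Polynomial.C_ne_zero.mpr hdval) (congrArg Subtype.val h)
  have hcu : ¬IsUnit cd := by
    intro h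
    obtain ⟨g, hg⟩ := h.exists_right_inv
    have hval : (C (d : L)) * (g : Polynomial L) = 1 := congrArg Subtype.val hg
    have hcoeff : (d : L) * (g : Polynomial L).coeff 0 = 1 := by
      have := congrArg (fun p => Polynomial.coeff p 0) hval
      simpa [Polynomial.mul_coeff_zero] using this
    exact hno ⟨(g : Polynomial L).coeff 0, g.2⟩ (Subtype.ext hcoeff)
  -- factor cd into irreducibles
  obtain ⟨sd, hsd, hsdprod⟩ := hatomic cd hc0 hcu
  have hsdcard : 1 ≤ Multiset.card sd := by
    rcases Nat.eq_zero_or_pos (Multiset.card sd) with h | h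
    · exfalso; apply hcu; rw [← hsdprod, Multiset.card_eq_zero.mp h]; simp
    · exact h
  -- get the bound for xR
  obtain ⟨N, hN⟩ := hbound xR hx0 hxu
  -- e : the cofactor d⁻ⁿ X
  have hinv : ((d : L))⁻¹ ^ (N + 1) ≠ 0 := pow_ne_zero _ (inv_ne_zero hdval)
  have hemem : (C ((d : L)⁻¹ ^ (N + 1)) * X : Polynomial L) ∈ R := by
    show (C ((d : L)⁻¹ ^ (N + 1)) * X : Polynomial L).coeff 0 ∈ D
    simpa using D.zero_mem
  set e : R := ⟨C ((d : L)⁻¹ ^ (N + 1)) * X, hemem⟩ with he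
  have he0 : e ≠ 0 := by
    intro h
    have : (C ((d : L)⁻¹ ^ (N + 1)) * X : Polynomial L) = 0 := congrArg Subtype.val h
    exact (mul_ne_zero (Polynomial.C_ne_zero.mpr hinv) Polynomial.X_ne_zero) this
  have heu : ¬IsUnit e := by
    intro h
    have := Polynomial.natDegree_eq_zero_of_isUnit (isUnit_val h)
    rw [show ((e : Polynomial L)) = C ((d : L)⁻¹ ^ (N + 1)) * X from rfl,
      Polynomial.natDegree_C_mul hinv, Polynomial.natDegree_X] at this
    exact one_ne_zero this
  obtain ⟨t, ht, htprod⟩ := hatomic e he0 heu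
  -- the long factorization of xR
  have hfact : ((N + 1) • sd + t).prod = xR := by
    rw [Multiset.prod_add, Multiset.prod_nsmul, hsdprod, htprod]
    apply Subtype.ext
    show (C (d : L)) ^ (N + 1) * (C ((d : L)⁻¹ ^ (N + 1)) * X) = X
    rw [← Polynomial.C_pow, ← mul_assoc, ← map_mul, ← mul_pow,
      mul_inv_cancel₀ hdval, one_pow, map_one, one_mul]
  have hirr : ∀ x ∈ (N + 1) • sd + t, Irreducible x := by
    intro x hx
    rcases Multiset.mem_add.mp hx with h | h
    · exact hsd x (Multiset.mem_nsmul.mp h).2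
    · exact ht x h
  have := hN _ hirr hfact
  rw [Multiset.card_add, Multiset.card_nsmul] at this
  have h1 : N + 1 ≤ (N + 1) * Multiset.card sd := Nat.le_mul_of_pos_right _ hsdcard
  omega

end Aux

/-- for fields `K ⊆ L` and `D` a subring of `K`, with `T = K + XL[X]` and
`R = D + XL[X]`, the ring `R` is a BFD iff `T` is a BFD and `D` is a field. -/
theorem stmt3 {L : Type*} [Field L] (K : Subfield L) (D : Subring L)
    (hDK : ∀ x, x ∈ D → x ∈ K) :
    IsBFD (composite D) ↔ IsBFD (composite K.toSubring) ∧ IsField D := by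
  constructor
  · intro hR
    refine ⟨bfd_of_field ?_, isField_of_bfd hR⟩
    intro a ha ha0
    exact ⟨a⁻¹, K.inv_mem ha, mul_inv_cancel₀ ha0⟩
  · rintro ⟨-, hD⟩
    apply bfd_of_field
    intro a ha ha0
    obtain ⟨b, hb⟩ := hD.mul_inv_cancel (show (⟨a, ha⟩ : D) ≠ 0 from fun h => ha0 (congrArg Subtype.val h))
    exact ⟨(b : L), b.2, congrArg Subtype.val hb⟩
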